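/- Let v : ℝᵈ → ℝ be smooth with compact support and w(x) = exp(‖x‖²/(2c)) with c > 0. Then ∫ (‖∇v(x)‖² − (d/c)·v(x)²)·w(x) dx ≥ 0. -/

import Mathlib

open MeasureTheory RealInnerProductSpace

noncomputable def wgt (d : ℕ) (c : ℝ) (x : EuclideanSpace ℝ (Fin d)) : ℝ :=
  Real.exp (‖x‖ ^ 2 / (2 * c))

noncomputable def lapE (d : ℕ) (f : EuclideanSpace ℝ (Fin d) → ℝ) (x : EuclideanSpace ℝ (Fin d)) : ℝ :=
  ∑ i, fderiv ℝ (fun y => fderiv ℝ f y (EuclideanSpace.single i 1)) x (EuclideanSpace.single i 1)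

noncomputable def divE (d : ℕ) (F : EuclideanSpace ℝ (Fin d) → EuclideanSpace ℝ (Fin d)) (x : EuclideanSpace ℝ (Fin d)) : ℝ :=
  ∑ i, fderiv ℝ F x (EuclideanSpace.single i 1) i

section Aux

variable {d : ℕ} {c : ℝ}

lemma hasFDerivAt_wgt (x : EuclideanSpace ℝ (Fin d)) :
    HasFDerivAt (wgt d c) ((wgt d c x * (2 * c)⁻¹) • (2 • innerSL ℝ x)) x := by
  have h1 : HasFDerivAt (fun y : EuclideanSpace ℝ (Fin d) => ‖y‖ ^ 2 / (2 * c))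
      ((2 * c)⁻¹ • (2 • innerSL ℝ x)) x := by
    simpa [div_eq_inv_mul, smul_smul, mul_comm] using
      ((hasStrictFDerivAt_norm_sq x).hasFDerivAt.const_mul ((2 * c)⁻¹))
  have h2 := (Real.hasDerivAt_exp (‖x‖ ^ 2 / (2 * c))).comp_hasFDerivAt x h1
  have hw : wgt d c = Real.exp ∘ fun y : EuclideanSpace ℝ (Fin d) => ‖y‖ ^ 2 / (2 * c) := rfl
  rw [hw]
  simpa [wgt, smul_smul] using h2

lemma contDiff_wgt : ContDiff ℝ (⊤ : ℕ∞) (wgt d c) :=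
  Real.contDiff_exp.comp ((contDiff_norm_sq ℝ).div_const _)

lemma differentiable_wgt : Differentiable ℝ (wgt d c) :=
  fun x => (hasFDerivAt_wgt x).differentiableAt

lemma fderiv_wgt_apply (hc : c ≠ 0) (x e : EuclideanSpace ℝ (Fin d)) :
    fderiv ℝ (wgt d c) x e = (⟪x, e⟫ / c) * wgt d c x := by
  rw [(hasFDerivAt_wgt x).fderiv]
  simp only [ContinuousLinearMap.smul_apply, innerSL_apply_apply, smul_eq_mul]
  field_simp
  ring

end Aux

theorem stmt_11 (d : ℕ) (hd : 1 ≤ d) (c : ℝ) (hc : 0 < c)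
    (v : EuclideanSpace ℝ (Fin d) → ℝ) (hv : ContDiff ℝ (⊤ : ℕ∞) v) (hvs : HasCompactSupport v) :
    0 ≤ ∫ x, (‖gradient v x‖ ^ 2 - (d / c) * (v x) ^ 2) * wgt d c x := by
  classical
  have hvd : Differentiable ℝ v := hv.differentiable (by simp)
  set W : EuclideanSpace ℝ (Fin d) → ℝ := wgt d c with hWdef
  have hWc : Continuous W := contDiff_wgt.continuous
  have hWd : Differentiable ℝ W := differentiable_wgt
  have hfdc : Continuous fun x => fderiv ℝ v x := hv.continuous_fderiv (by simp)
  have hgradc : Continuous fun x => gradient v x := by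
    exact (LinearIsometryEquiv.continuous _).comp hfdc
  have hinner : ∀ (x e : EuclideanSpace ℝ (Fin d)),
      fderiv ℝ v x e = ⟪gradient v x, e⟫ := by
    intro x e
    rw [gradient, InnerProductSpace.toDual_symm_apply]
  -- integrability helper
  have hint : ∀ F : EuclideanSpace ℝ (Fin d) → ℝ, Continuous F →
      Integrable (fun x => v x * F x) := by
    intro F hF
    exact (hv.continuous.mul hF).integrable_of_hasCompactSupport hvs.mul_right
  -- derivative of v²
  set u : EuclideanSpace ℝ (Fin d) → ℝ := fun y => v y * v y with hudef
  have hu_diff : Differentiable ℝ u := hvd.mul hvd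
  have hu_fderiv : ∀ (x e : EuclideanSpace ℝ (Fin d)),
      fderiv ℝ u x e = 2 * v x * fderiv ℝ v x e := by
    intro x e
    rw [show u = v * v from rfl, ((hvd x).hasFDerivAt.mul (hvd x).hasFDerivAt).fderiv]
    simp only [ContinuousLinearMap.add_apply, ContinuousLinearMap.smul_apply, smul_eq_mul]
    ring
  have hxic : ∀ i : Fin d, Continuous fun x : EuclideanSpace ℝ (Fin d) => x i :=
    fun i => (EuclideanSpace.proj (𝕜 := ℝ) i).continuous
  -- the per-coordinate integrand after integration by parts
  set T : Fin d → EuclideanSpace ℝ (Fin d) → ℝ := fun i x =>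
    (2 * v x * fderiv ℝ v x (EuclideanSpace.single i 1)) * (x i * W x)
      + (v x * v x) * (x i * (x i / c * W x) + W x) with hTdef
  have hTint : ∀ i, Integrable (T i) := by
    intro i
    have h1 : Integrable (fun x =>
        v x * ((2 * fderiv ℝ v x (EuclideanSpace.single i 1)) * (x i * W x))) :=
      hint _ ((continuous_const.mul (hfdc.clm_apply continuous_const)).mul
        ((hxic i).mul hWc))
    have h2 : Integrable (fun x =>
        v x * (v x * (x i * (x i / c * W x) + W x))) :=
      hint _ (hv.continuous.mul (((hxic i).mul (((hxic i).div_const c).mul hWc)).add hWc))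
    exact (h1.add h2).congr (ae_of_all _ fun x => by simp only [hTdef, Pi.add_apply]; ring)
  have hIBP : ∀ i, ∫ x, T i x = 0 := by
    intro i
    set e : EuclideanSpace ℝ (Fin d) := EuclideanSpace.single i 1 with hedef
    set g : EuclideanSpace ℝ (Fin d) → ℝ := fun y => y i * W y with hgdef
    have hg_deriv : ∀ x, HasFDerivAt g
        ((x i) • fderiv ℝ W x + W x • (EuclideanSpace.proj (𝕜 := ℝ) i)) x := by
      intro x
      exact (EuclideanSpace.proj (𝕜 := ℝ) i).hasFDerivAt.mul (hWd x).hasFDerivAt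
    have hg_diff : Differentiable ℝ g := fun x => (hg_deriv x).differentiableAt
    have hg_fderiv : ∀ x, fderiv ℝ g x e = x i * (x i / c * W x) + W x := by
      intro x
      rw [(hg_deriv x).fderiv]
      simp only [ContinuousLinearMap.add_apply, ContinuousLinearMap.smul_apply, smul_eq_mul]
      rw [hWdef, fderiv_wgt_apply hc.ne']
      have h1 : ⟪x, e⟫ = x i := by
        simp [hedef, EuclideanSpace.inner_single_right]
      have h2 : (EuclideanSpace.proj (𝕜 := ℝ) i) e = 1 := by
        simp [hedef]
      rw [h1, h2]
      ring
    have hA : Integrable (fun x => fderiv ℝ u x e * g x) := by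
      have : Integrable (fun x =>
          v x * ((2 * fderiv ℝ v x e) * g x)) :=
        hint _ ((continuous_const.mul (hfdc.clm_apply continuous_const)).mul
          ((hxic i).mul hWc))
      exact this.congr (ae_of_all _ fun x => by simp only [hu_fderiv]; ring)
    have hB : Integrable (fun x => u x * fderiv ℝ g x e) := by
      have : Integrable (fun x =>
          v x * (v x * (x i * (x i / c * W x) + W x))) :=
        hint _ (hv.continuous.mul (((hxic i).mul (((hxic i).div_const c).mul hWc)).add hWc))
      exact this.congr (ae_of_all _ fun x => by simp only [hg_fderiv, hudef]; ring)
    have hC : Integrable (fun x => u x * g x) :=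
      (hint _ (hv.continuous.mul ((hxic i).mul hWc))).congr
        (ae_of_all _ fun x => by simp [hudef]; ring)
    have key := integral_mul_fderiv_eq_neg_fderiv_mul_of_integrable hA hB hC (fun x _ => hu_diff x) (fun x _ => hg_diff x)
    have hsplit : ∫ x, T i x = (∫ x, fderiv ℝ u x e * g x) + ∫ x, u x * fderiv ℝ g x e := by
      rw [← integral_add hA hB]
      apply integral_congr_ae
      filter_upwards with x
      simp only [hTdef]
      rw [hu_fderiv, hg_fderiv]
    rw [hsplit, key]
    ring
  -- sum over i
  have hsum0 : ∫ x, ∑ i, T i x = 0 := by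
    rw [integral_finset_sum _ (fun i _ => hTint i)]
    simp [hIBP]
  -- pointwise identity for the sum
  have hnormsq : ∀ x : EuclideanSpace ℝ (Fin d), ∑ i, x i * x i = ‖x‖ ^ 2 := by
    intro x
    rw [← real_inner_self_eq_norm_sq, PiLp.inner_apply]
    simp [RCLike.inner_apply, sq]
  have hgradsum : ∀ x : EuclideanSpace ℝ (Fin d),
      ∑ i, fderiv ℝ v x (EuclideanSpace.single i 1) * x i = ⟪gradient v x, x⟫ := by
    intro x
    rw [PiLp.inner_apply]
    refine Finset.sum_congr rfl fun i _ => ?_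
    rw [hinner]
    simp [EuclideanSpace.inner_single_right, RCLike.inner_apply]
    rw [mul_comm, hinner, EuclideanSpace.inner_single_right]
    simp
  have hptsum : ∀ x : EuclideanSpace ℝ (Fin d), ∑ i, T i x =
      (2 * v x * ⟪gradient v x, x⟫ + v x * v x * (‖x‖ ^ 2 / c) + (d : ℝ) * (v x * v x)) * W x := by
    intro x
    rw [hTdef]
    simp only
    rw [Finset.sum_add_distrib]
    have e1 : ∑ i, (2 * v x * fderiv ℝ v x (EuclideanSpace.single i 1)) * (x i * W x)
        = 2 * v x * (∑ i, fderiv ℝ v x (EuclideanSpace.single i 1) * x i) * W x := by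
      simp only [Finset.mul_sum, Finset.sum_mul]
      exact Finset.sum_congr rfl fun i _ => by ring
    have e2 : ∑ i : Fin d, (v x * v x) * (x i * (x i / c * W x) + W x)
        = v x * v x * ((∑ i, x i * x i) / c * W x) + (d : ℝ) * (v x * v x) * W x := by
      have hterm : ∀ i : Fin d, v x * v x * (x i * (x i / c * W x) + W x)
          = (x i * x i) * (v x * v x / c * W x) + v x * v x * W x := fun i => by ring
      rw [Finset.sum_congr rfl fun i _ => hterm i, Finset.sum_add_distrib, ← Finset.sum_mul,
        Finset.sum_const, Finset.card_univ, Fintype.card_fin, nsmul_eq_mul]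
      ring
    rw [e1, e2, hgradsum, hnormsq]
    ring
  have hS0 : ∫ x, (2 * v x * ⟪gradient v x, x⟫ + v x * v x * (‖x‖ ^ 2 / c)
      + (d : ℝ) * (v x * v x)) * W x = 0 := by
    rw [← hsum0]
    exact (integral_congr_ae (ae_of_all _ fun x => (hptsum x).symm))
  -- the nonnegative field
  set G : EuclideanSpace ℝ (Fin d) → EuclideanSpace ℝ (Fin d) :=
    fun x => gradient v x + (v x / c) • x with hGdef
  have hGc : Continuous G := hgradc.add ((hv.continuous.div_const c).smul continuous_id)
  have hgradcs : HasCompactSupport (gradient v) := by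
    have h := (hvs.fderiv ℝ).comp_left
      (g := fun L : EuclideanSpace ℝ (Fin d) →L[ℝ] ℝ =>
        (InnerProductSpace.toDual ℝ (EuclideanSpace ℝ (Fin d))).symm L) (map_zero _)
    exact h
  have hGcs : HasCompactSupport G := by
    apply hgradcs.add
    apply hvs.mono
    intro x hx
    simp only [Function.mem_support] at hx ⊢
    intro h
    apply hx
    rw [h]
    simp
  have hGW : Integrable (fun x => ‖G x‖ ^ 2 * W x) := by
    apply Continuous.integrable_of_hasCompactSupport
    · exact (hGc.norm.pow 2).mul hWc
    · exact (hGcs.comp_left (g := fun y : EuclideanSpace ℝ (Fin d) => ‖y‖ ^ 2)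
        (by simp)).mul_right
  have hSint : Integrable (fun x => (2 * v x * ⟪gradient v x, x⟫ + v x * v x * (‖x‖ ^ 2 / c)
      + (d : ℝ) * (v x * v x)) * W x) := by
    have : Integrable (fun x => v x * (((2 * ⟪gradient v x, x⟫) + v x * (‖x‖ ^ 2 / c)
        + (d : ℝ) * v x) * W x)) := by
      apply hint
      exact (((continuous_const.mul (hgradc.inner continuous_id)).add
        (hv.continuous.mul ((continuous_norm.pow 2).div_const c))).add
        (continuous_const.mul hv.continuous)).mul hWc
    exact this.congr (ae_of_all _ fun x => by ring)
  -- final pointwise identity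
  have hfinal : ∀ x : EuclideanSpace ℝ (Fin d),
      (‖gradient v x‖ ^ 2 - (↑d / c) * (v x) ^ 2) * W x
      = ‖G x‖ ^ 2 * W x - (1 / c) * ((2 * v x * ⟪gradient v x, x⟫
        + v x * v x * (‖x‖ ^ 2 / c) + (d : ℝ) * (v x * v x)) * W x) := by
    intro x
    have hns : ‖G x‖ ^ 2 = ‖gradient v x‖ ^ 2 + 2 * (v x / c) * ⟪gradient v x, x⟫
        + (v x / c) ^ 2 * ‖x‖ ^ 2 := by
      rw [hGdef]
      simp only
      rw [norm_add_sq_real, real_inner_smul_right, norm_smul, Real.norm_eq_abs, mul_pow, sq_abs]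
      ring
    rw [hns]
    field_simp
    ring
  calc (0 : ℝ) ≤ ∫ x, ‖G x‖ ^ 2 * W x := by
        apply integral_nonneg
        intro x
        refine mul_nonneg (sq_nonneg _) (le_of_lt ?_)
        rw [hWdef]
        unfold wgt
        exact Real.exp_pos _
    _ = ∫ x, (‖gradient v x‖ ^ 2 - (↑d / c) * (v x) ^ 2) * W x := by
        rw [integral_congr_ae (ae_of_all _ hfinal), integral_sub hGW (hSint.const_mul _),
          integral_const_mul, hS0]
        simp
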